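/- Let A be a g-circulant matrix of order k × k over a field. If gcd(k, g) > 1, then A has two identical rows; in particular, A is singular and hence not MDS. -/

import Mathlib

/-- The `g`-circulant matrix with first row `c`: entry `(i,j)` is `c (j - g*i)`. -/
def gCirc {k : ℕ} {F : Type*} (g : ℕ) (c : ZMod k → F) : Matrix (ZMod k) (ZMod k) F :=
  Matrix.of fun i j => c (j - (g : ZMod k) * i)

/-- A square matrix is MDS if every square submatrix is nonsingular. -/
def IsMDS {ι : Type*} [Fintype ι] [DecidableEq ι] {F : Type*} [Field F]
    (A : Matrix ι ι F) : Prop :=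
  ∀ (n : ℕ) (r s : Fin n → ι), Function.Injective r → Function.Injective s →
    (Matrix.of fun a b => A (r a) (s b)).det ≠ 0

/-! When `gcd(k, g) > 1`, `g` is not a unit, hence a zero divisor, of the finite ring `ZMod k`:
`g * e = 0` for some `e ≠ 0`, and then rows `i` and `i + e` of the `g`-circulant matrix coincide. -/

theorem exists_ne_zero_mul_eq_zero_of_not_isUnit {R : Type*} [CommRing R] [Finite R] {a : R}
    (ha : ¬IsUnit a) : ∃ b, b ≠ 0 ∧ a * b = 0 := by
  rw [isUnit_iff_mem_nonZeroDivisors_of_finite, mem_nonZeroDivisors_iff_left] at ha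
  push Not at ha
  exact ha.imp fun b hb => ⟨hb.2, hb.1⟩

theorem gCirc_row_add_eq {k : ℕ} {F : Type*} {g : ℕ} (c : ZMod k → F) {e : ZMod k}
    (he : (g : ZMod k) * e = 0) (i : ZMod k) : gCirc g c (i + e) = gCirc g c i := by
  ext j
  simp [gCirc, mul_add, he]

theorem Matrix.not_isMDS_of_det_eq_zero {ι : Type*} [Fintype ι] [DecidableEq ι] {F : Type*}
    [Field F] {A : Matrix ι ι F} (hA : A.det = 0) : ¬IsMDS A := fun hMDS =>
  hMDS _ _ _ (Fintype.equivFin ι).symm.injective (Fintype.equivFin ι).symm.injective <| by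
    rw [← Matrix.submatrix, Matrix.det_submatrix_equiv_self, hA]

theorem gCirc_not_mds_of_gcd_gt_one {k : ℕ} [NeZero k] {F : Type*} [Field F]
    (g : ℕ) (c : ZMod k → F) (h : 1 < Nat.gcd k g) :
    (∃ i₁ i₂ : ZMod k, i₁ ≠ i₂ ∧ ∀ j, gCirc g c i₁ j = gCirc g c i₂ j) ∧
      (gCirc g c).det = 0 ∧ ¬ IsMDS (gCirc g c) := by
  have hg : ¬IsUnit (g : ZMod k) := by
    rw [ZMod.isUnit_iff_coprime, Nat.coprime_comm, Nat.Coprime]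
    exact h.ne'
  obtain ⟨e, he0, he⟩ := exists_ne_zero_mul_eq_zero_of_not_isUnit hg
  have hrow : gCirc g c e = gCirc g c 0 := by simpa using gCirc_row_add_eq c he 0
  have hdet : (gCirc g c).det = 0 := Matrix.det_zero_of_row_eq he0 hrow
  exact ⟨⟨e, 0, he0, congrFun hrow⟩, hdet, Matrix.not_isMDS_of_det_eq_zero hdet⟩
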